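/- arXiv:2108.10237 — 2 statements merged into one kernel-verified Lean document; each statement's English description precedes it below -/
import Mathlib

section
/- Let V be an n-dimensional complex inner product space, let 1 ≤ k ≤ n, let σ be a real number, and let R be a Kähler-type curvature tensor on V. Suppose that for every k-dimensional complex subspace Σ of V and every X ∈ Σ one has Ric_k(Σ)(X,X̄) ≤ −(k+1)σ|X|². Then for every X ∈ V, (k−1)|X|²·Ric(X,X̄) + (n−k)·R(X,X̄,X,X̄) ≤ −(n−1)(k+1)σ|X|⁴. -/
/-- A Kähler-type curvature tensor on a complex vector space `V`:
`R X Y Z W` stands for `R(X, Ȳ, Z, W̄)`; it is ℂ-linear in the first and third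
arguments, conjugate-linear in the second and fourth, and satisfies the
Kähler symmetries. -/
structure KahlerCurvature (V : Type*) [AddCommGroup V] [Module ℂ V] where
  R : V → V → V → V → ℂ
  add1 : ∀ X X' Y Z W, R (X + X') Y Z W = R X Y Z W + R X' Y Z W
  smul1 : ∀ (a : ℂ) (X Y Z W : V), R (a • X) Y Z W = a * R X Y Z W
  add2 : ∀ X Y Y' Z W, R X (Y + Y') Z W = R X Y Z W + R X Y' Z W
  smul2 : ∀ (a : ℂ) (X Y Z W : V), R X (a • Y) Z W = (starRingEnd ℂ) a * R X Y Z W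
  add3 : ∀ X Y Z Z' W, R X Y (Z + Z') W = R X Y Z W + R X Y Z' W
  smul3 : ∀ (a : ℂ) (X Y Z W : V), R X Y (a • Z) W = a * R X Y Z W
  add4 : ∀ X Y Z W W', R X Y Z (W + W') = R X Y Z W + R X Y Z W'
  smul4 : ∀ (a : ℂ) (X Y Z W : V), R X Y Z (a • W) = (starRingEnd ℂ) a * R X Y Z W
  sym13 : ∀ X Y Z W, R X Y Z W = R Z Y X W
  sym24 : ∀ X Y Z W, R X Y Z W = R X W Z Y
  conj_symm : ∀ X Y Z W, R Y X W Z = (starRingEnd ℂ) (R X Y Z W)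

/-!
Write `X = |X| u` with `|u| = 1` and extend `u` to an orthonormal basis `u = b₀, b₁, …, b_{n-1}`.
For each of the `n - 1` cyclic windows `W` of `k - 1` consecutive indices in `{1, …, n - 1}`, the
hypothesis on the `k`-plane spanned by `u` and `(bᵢ)_{i ∈ W}` gives
`R(u,ū,u,ū) + Σ_{i ∈ W} R(u,ū,bᵢ,b̄ᵢ) ≤ -(k+1)σ`. Summing over the windows counts every `i` exactly
`k - 1` times, so `(n-1) R(u,ū,u,ū) + (k-1) (Ric(u,ū) - R(u,ū,u,ū)) ≤ -(n-1)(k+1)σ`, which is the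
claim for `u`; both sides are homogeneous of degree 4 in `X`.
-/

open Finset Module

theorem card_mul_add_mul_sum_le_of_forall_translate {G : Type*} [AddCommGroup G] [Fintype G]
    {l : ℕ} (t : Fin l → G) (g : G → ℝ) {a c : ℝ} (h : ∀ j, a + ∑ s, g (j + t s) ≤ c) :
    Fintype.card G * a + l * ∑ i, g i ≤ Fintype.card G * c := by
  have htranslates : ∑ j, ∑ s, g (j + t s) = l * ∑ i, g i := by
    calc ∑ j, ∑ s, g (j + t s) = ∑ s : Fin l, ∑ i, g i := by
          rw [sum_comm]
          exact sum_congr rfl fun s _ => Equiv.sum_comp (Equiv.addRight (t s)) g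
      _ = l * ∑ i, g i := by simp
  simpa [sum_add_distrib, htranslates] using sum_le_sum fun j (_ : j ∈ univ) => h j

theorem OrthonormalBasis.sum_sesq_self_eq {𝕜 E ι ι' : Type*} [RCLike 𝕜] [NormedAddCommGroup E]
    [InnerProductSpace 𝕜 E] [Fintype ι] [Fintype ι'] (B : E →ₗ[𝕜] E →ₗ⋆[𝕜] 𝕜)
    (b : OrthonormalBasis ι 𝕜 E) (e : OrthonormalBasis ι' 𝕜 E) :
    ∑ i, B (b i) (b i) = ∑ p, B (e p) (e p) :=
  calc ∑ i, B (b i) (b i) = ∑ i, ∑ p, inner 𝕜 (e p) (b i) * B (e p) (b i) := by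
        refine sum_congr rfl fun i _ => ?_
        nth_rw 1 [← e.sum_repr' (b i)]
        simp
    _ = ∑ p, B (e p) (∑ i, inner 𝕜 (b i) (e p) • b i) := by
        rw [sum_comm]
        simp
    _ = ∑ p, B (e p) (e p) := by simp_rw [b.sum_repr']

theorem exists_norm_eq_one_and_eq_norm_smul {𝕜 E : Type*} [RCLike 𝕜] [NormedAddCommGroup E]
    [NormedSpace 𝕜 E] [Nontrivial E] (X : E) : ∃ u : E, ‖u‖ = 1 ∧ X = (‖X‖ : 𝕜) • u := by
  by_cases hX : X = 0
  · obtain ⟨Y, hY⟩ := exists_ne (0 : E)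
    exact ⟨_, norm_smul_inv_norm (𝕜 := 𝕜) hY, by simp [hX]⟩
  · refine ⟨(‖X‖⁻¹ : 𝕜) • X, norm_smul_inv_norm hX, ?_⟩
    rw [smul_smul, mul_inv_cancel₀ (by simpa using hX), one_smul]

namespace KahlerCurvature

section

variable {V : Type*} [AddCommGroup V] [Module ℂ V] (T : KahlerCurvature V)

def sesqForm (X Y : V) : V →ₗ[ℂ] V →ₗ⋆[ℂ] ℂ :=
  LinearMap.mk₂'ₛₗ _ _ (T.R X Y) (T.add3 X Y) (fun a Z W => T.smul3 a X Y Z W) (T.add4 X Y)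
    (fun a Z W => T.smul4 a X Y Z W)

theorem R_ofReal_smul_ofReal_smul (r : ℝ) (X Z W : V) :
    T.R ((r : ℂ) • X) ((r : ℂ) • X) Z W = (r ^ 2 : ℝ) * T.R X X Z W := by
  rw [T.smul1, T.smul2, Complex.conj_ofReal]
  push_cast
  ring

theorem R_ofReal_smul_self (r : ℝ) (X : V) :
    T.R ((r : ℂ) • X) ((r : ℂ) • X) ((r : ℂ) • X) ((r : ℂ) • X) = (r ^ 4 : ℝ) * T.R X X X X := by
  rw [T.R_ofReal_smul_ofReal_smul, T.smul3, T.smul4, Complex.conj_ofReal]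
  push_cast
  ring

end

variable {V : Type*} [NormedAddCommGroup V] [InnerProductSpace ℂ V] (T : KahlerCurvature V)

theorem sum_R_orthonormalBasis_eq {ι ι' : Type*} [Fintype ι] [Fintype ι'] (b : OrthonormalBasis ι ℂ V)
    (e : OrthonormalBasis ι' ℂ V) (X Y : V) :
    ∑ i, T.R X Y (b i) (b i) = ∑ p, T.R X Y (e p) (e p) :=
  b.sum_sesq_self_eq (T.sesqForm X Y) e

/-- `Ric_k ≤ c`, in the sense that `Ric_k(P)(X, X̄) ≤ c |X|²` for every `k`-dimensional `P ∋ X`. -/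
def RicKLE (k : ℕ) (c : ℝ) : Prop :=
  ∀ P : Submodule ℂ V, finrank ℂ P = k → ∀ f : OrthonormalBasis (Fin k) ℂ P, ∀ X ∈ P,
    (∑ j, T.R X X (f j : V) (f j : V)).re ≤ c * ‖X‖ ^ 2

variable {T}

theorem RicKLE.sum_le_of_orthonormal {k : ℕ} {c : ℝ} (h : T.RicKLE k c) {v : Fin k → V}
    (hv : Orthonormal ℂ v) {X : V} (hX : X ∈ Submodule.span ℂ (Set.range v)) :
    (∑ j, T.R X X (v j) (v j)).re ≤ c * ‖X‖ ^ 2 := by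
  let f := (Basis.span hv.linearIndependent).toOrthonormalBasis (by
    simpa only [← Basis.span_apply hv.linearIndependent] using orthonormal_span hv)
  have hf : ∀ j, (f j : V) = v j := by simp [f, Basis.coe_toOrthonormalBasis]
  simpa [hf] using h _ (by simp [finrank_span_eq_card hv.linearIndependent]) f X hX

theorem RicKLE.mul_add_mul_sum_le {m l : ℕ} {c : ℝ} (h : T.RicKLE (l + 1) c) (hlm : l ≤ m)
    (b : OrthonormalBasis (Fin (m + 1)) ℂ V) :
    m * (T.R (b 0) (b 0) (b 0) (b 0)).re
      + l * ∑ i : Fin m, (T.R (b 0) (b 0) (b i.succ) (b i.succ)).re ≤ m * c := by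
  rcases Nat.eq_zero_or_pos m with rfl | hm
  · simp [Nat.le_zero.mp hlm]
  have : NeZero m := ⟨hm.ne'⟩
  have hwindow : ∀ j : Fin m, (T.R (b 0) (b 0) (b 0) (b 0)).re
      + ∑ s : Fin l, (T.R (b 0) (b 0) (b (j + Fin.castLE hlm s).succ)
        (b (j + Fin.castLE hlm s).succ)).re ≤ c := by
    intro j
    let w : Fin (l + 1) → Fin (m + 1) := Fin.cons 0 fun s => (j + Fin.castLE hlm s).succ
    have hw : Function.Injective w := Fin.cons_injective_iff.mpr
      ⟨by simp [Fin.succ_ne_zero],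
        (Fin.succ_injective _).comp <| (add_right_injective j).comp (Fin.castLE_injective hlm)⟩
    simpa [Fin.sum_univ_succ, w, b.orthonormal.1 0] using
      h.sum_le_of_orthonormal (b.orthonormal.comp w hw) (Submodule.subset_span ⟨0, rfl⟩)
  simpa using card_mul_add_mul_sum_le_of_forall_translate (Fin.castLE hlm)
    (fun i => (T.R (b 0) (b 0) (b i.succ) (b i.succ)).re) hwindow

end KahlerCurvature

/-- Lemma 1 (Chu–Lee–Tam): if the `k`-Ricci curvature satisfies
`Ric_k(Σ)(X, X̄) ≤ -(k+1)σ|X|²` for every `k`-dimensional complex subspace `Σ`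
and every `X ∈ Σ`, then for every `X ∈ V`,
`(k-1)|X|² Ric(X,X̄) + (n-k) R(X,X̄,X,X̄) ≤ -(n-1)(k+1)σ|X|⁴`. -/
theorem stmt0 {V : Type*} [NormedAddCommGroup V] [InnerProductSpace ℂ V]
    [FiniteDimensional ℂ V]
    (n k : ℕ) (hn : Module.finrank ℂ V = n) (hk1 : 1 ≤ k) (hkn : k ≤ n)
    (σ : ℝ) (T : KahlerCurvature V)
    (e : OrthonormalBasis (Fin n) ℂ V)
    (hRick : ∀ P : Submodule ℂ V, Module.finrank ℂ P = k →
      ∀ f : OrthonormalBasis (Fin k) ℂ P, ∀ X ∈ P,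
        (∑ j, T.R X X (f j : V) (f j : V)).re ≤ -((k : ℝ) + 1) * σ * ‖X‖ ^ 2) :
    ∀ X : V,
      ((k : ℝ) - 1) * ‖X‖ ^ 2 * (∑ i, T.R X X (e i) (e i)).re
          + ((n : ℝ) - (k : ℝ)) * (T.R X X X X).re
        ≤ -(((n : ℝ) - 1) * ((k : ℝ) + 1) * σ * ‖X‖ ^ 4) := by
  intro X
  obtain ⟨l, rfl⟩ : ∃ l, k = l + 1 := ⟨k - 1, by omega⟩
  obtain ⟨m, rfl⟩ : ∃ m, n = m + 1 := ⟨n - 1, by omega⟩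
  have : Nontrivial V := Module.nontrivial_of_finrank_eq_succ hn
  obtain ⟨u, hu, hX⟩ : ∃ u : V, ‖u‖ = 1 ∧ X = (‖X‖ : ℂ) • u :=
    exists_norm_eq_one_and_eq_norm_smul X
  set r := ‖X‖
  rw [hX]
  obtain ⟨b, hb⟩ := Orthonormal.exists_orthonormalBasis_extension_of_card_eq
    (v := fun _ => u) (s := {(0 : Fin (m + 1))}) (by simpa using hn) (by simpa using hu)
  have key := KahlerCurvature.RicKLE.mul_add_mul_sum_le hRick (by omega : l ≤ m) b
  rw [hb 0 rfl] at key
  have hRic : ∑ i, T.R u u (e i) (e i)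
      = T.R u u u u + ∑ i : Fin m, T.R u u (b i.succ) (b i.succ) := by
    rw [T.sum_R_orthonormalBasis_eq e b, Fin.sum_univ_succ, hb 0 rfl]
  rw [T.R_ofReal_smul_self]
  simp only [T.R_ofReal_smul_ofReal_smul, ← mul_sum, hRic,
    Complex.re_ofReal_mul, Complex.add_re, Complex.re_sum] at key ⊢
  push_cast at key ⊢
  linarith [mul_le_mul_of_nonneg_left key (by positivity : 0 ≤ r ^ 4)]
end

section
/- Let V be an n-dimensional complex vector space equipped with two Hermitian inner products h and g, let 1 ≤ k ≤ n−1, let σ be a real number, and let R be a Kähler-type curvature tensor on V. Suppose that for every k-dimensional complex subspace Σ of V and every X ∈ Σ one has Ric_k(Σ)(X,X̄) ≤ −(k+1)σ·h(X,X), where Ric_k and the Ricci form Ric are defined using h-orthonormal bases. Then, for any g-orthonormal basis (e₁,…,eₙ) of V, 2·Σ_{i,j} R(eᵢ,ēᵢ,eⱼ,ēⱼ) ≤ −((n−1)(k+1)σ/(n−k))·((tr_g h)² + |h|_g²) − ((k−1)/(n−k))·(tr_g h)·(tr_g Ric) − ((k−1)/(n−k))·⟨h,Ric⟩_g, where tr_g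 h = Σᵢ h(eᵢ,eᵢ), |h|_g² = Σ_{i,j} |h(eᵢ,eⱼ)|², tr_g Ric = Σᵢ Ric(eᵢ,ēᵢ), and ⟨h,Ric⟩_g = Σ_{i,j} h(eᵢ,eⱼ)·Ric(eⱼ,ēᵢ). -/
section

open Finset Complex ComplexConjugate

lemma Fin.sum_univ_pi_succ {α M : Type*} [Fintype α] [AddCommMonoid M] {m : ℕ}
    (g : (Fin (m + 1) → α) → M) : ∑ ε, g ε = ∑ a, ∑ ε : Fin m → α, g (Fin.cons a ε) :=
  ((Fintype.sum_equiv (Fin.consEquiv fun _ => α) _ _ fun _ => rfl).symm).trans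
    (Fintype.sum_prod_type _)

lemma Fin.sum_sum_add_castLE {M : Type*} [AddCommMonoid M] {N K : ℕ} [NeZero N] (hKN : K ≤ N)
    (y : Fin N → M) : ∑ t, ∑ j : Fin K, y (t + Fin.castLE hKN j) = K • ∑ s, y s := by
  rw [sum_comm]
  simp only [fun c => Fintype.sum_equiv (Equiv.addRight c) (fun t => y (t + c)) y fun _ => rfl,
    sum_const]

variable {V : Type*} [AddCommGroup V] [Module ℂ V]

structure HermitianForm (V : Type*) [AddCommGroup V] [Module ℂ V] where
  toFun : V → V → ℂ
  add_left : ∀ X X' Y, toFun (X + X') Y = toFun X Y + toFun X' Y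
  smul_left : ∀ (a : ℂ) (X Y : V), toFun (a • X) Y = a * toFun X Y
  conj_symm : ∀ X Y, toFun Y X = conj (toFun X Y)

namespace HermitianForm

instance : CoeFun (HermitianForm V) fun _ => V → V → ℂ := ⟨toFun⟩

variable (H : HermitianForm V)

lemma add_right (X Y Y' : V) : H X (Y + Y') = H X Y + H X Y' := by
  rw [H.conj_symm, H.add_left, map_add, ← H.conj_symm, ← H.conj_symm]

lemma smul_right (a : ℂ) (X Y : V) : H X (a • Y) = conj a * H X Y := by
  rw [H.conj_symm, H.smul_left, map_mul, ← H.conj_symm]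

lemma sum_left {ι : Type*} (s : Finset ι) (f : ι → V) (Y : V) :
    H (∑ i ∈ s, f i) Y = ∑ i ∈ s, H (f i) Y :=
  map_sum (AddMonoidHom.mk' (H · Y) fun X X' => H.add_left X X' Y) f s

lemma zero_left (Y : V) : H 0 Y = 0 := by
  simpa using H.sum_left (∅ : Finset V) id Y

lemma im_self (X : V) : (H X X).im = 0 := by
  have := congrArg Complex.im (H.conj_symm X X)
  rw [conj_im] at this
  linarith

lemma ofReal_re_self (X : V) : ((H X X).re : ℂ) = H X X :=
  ext rfl (H.im_self X).symm

lemma re_sum_mul_swap {ι : Type*} [Fintype ι] (x : ι → V) :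
    (∑ i, ∑ j, H (x i) (x j) * H (x j) (x i)).re = ∑ i, ∑ j, ‖H (x i) (x j)‖ ^ 2 := by
  simp only [re_sum]
  refine sum_congr rfl fun i _ => sum_congr rfl fun j _ => ?_
  rw [H.conj_symm (x i) (x j), mul_conj', ← ofReal_pow, ofReal_re]

def IsOrthonormal {ι : Type*} [DecidableEq ι] (f : ι → V) : Prop :=
  ∀ i j, H (f i) (f j) = if i = j then 1 else 0

variable {H}

lemma IsOrthonormal.comp {ι κ : Type*} [DecidableEq ι] [DecidableEq κ] {f : ι → V}
    (hf : H.IsOrthonormal f) {g : κ → ι} (hg : Function.Injective g) :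
    H.IsOrthonormal (f ∘ g) := fun i j => by
  simp only [Function.comp, hf (g i) (g j), hg.eq_iff]

lemma IsOrthonormal.linearIndependent {ι : Type*} [Fintype ι] [DecidableEq ι] {f : ι → V}
    (hf : H.IsOrthonormal f) : LinearIndependent ℂ f := by
  rw [Fintype.linearIndependent_iff]
  intro c hc i
  have := congrArg (H · (f i)) hc
  simpa [H.sum_left, H.smul_left, hf _ i, H.zero_left] using this

lemma IsOrthonormal.sum_smul {ι : Type*} [Fintype ι] [DecidableEq ι] {b : Module.Basis ι ℂ V}
    (hb : H.IsOrthonormal b) (X : V) : ∑ i, H X (b i) • b i = X := by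
  have hrepr : ∀ i, H X (b i) = b.repr X i := fun i => by
    conv_lhs => rw [← b.sum_repr X]
    simp only [H.sum_left, H.smul_left, hb _ i, mul_ite, mul_one, mul_zero, sum_ite_eq', mem_univ,
      if_true]
  simp only [hrepr, b.sum_repr]

lemma IsOrthonormal.sum_apply_mul_apply {ι : Type*} [Fintype ι] [DecidableEq ι]
    {b : Module.Basis ι ℂ V} (hb : H.IsOrthonormal b) (X Y : V) : ∑ i, H X (b i) * H (b i) Y = H X Y := by
  conv_rhs => rw [← hb.sum_smul X]
  simp only [H.sum_left, H.smul_left]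

lemma IsOrthonormal.sum_sesq_eq {ι : Type*} [Fintype ι] [DecidableEq ι]
    {b c : Module.Basis ι ℂ V} (hb : H.IsOrthonormal b) (hc : H.IsOrthonormal c)
    (B : V →ₗ[ℂ] V →ₗ⋆[ℂ] ℂ) : ∑ i, B (c i) (c i) = ∑ i, B (b i) (b i) := by
  -- the transition matrix between the two orthonormal bases is unitary
  have hcb : ∀ i j, ∑ m, H (c m) (b i) * conj (H (c m) (b j)) = if i = j then 1 else 0 :=
    fun i j => by
      simp_rw [← H.conj_symm, mul_comm (H (c _) (b i)), hc.sum_apply_mul_apply, hb j i,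
        eq_comm (a := j)]
  calc ∑ m, B (c m) (c m)
      = ∑ m, ∑ i, ∑ j, H (c m) (b i) * conj (H (c m) (b j)) * B (b i) (b j) := by
        refine sum_congr rfl fun m _ => ?_
        conv_lhs => rw [← hb.sum_smul (c m)]
        simp only [map_sum, map_smul, map_smulₛₗ, LinearMap.sum_apply, LinearMap.smul_apply,
          smul_eq_mul, mul_sum]
        rw [sum_comm]
        exact sum_congr rfl fun _ _ => sum_congr rfl fun _ _ => by ring
    _ = ∑ i, ∑ j, (if i = j then 1 else 0) * B (b i) (b j) := by
        rw [sum_comm]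
        refine sum_congr rfl fun i _ => ?_
        rw [sum_comm]
        exact sum_congr rfl fun j _ => by rw [← hcb i j, Finset.sum_mul]
    _ = ∑ i, B (b i) (b i) := by simp

/-- `H` as a Mathlib inner product; these are conjugate-linear on the left, hence the swap. -/
@[reducible] def toCore (H : HermitianForm V) (hH : ∀ X, X ≠ 0 → 0 < (H X X).re) :
    InnerProductSpace.Core ℂ V where
  inner X Y := H Y X
  conj_inner_symm X Y := (H.conj_symm X Y).symm
  re_inner_nonneg X := by
    rcases eq_or_ne X 0 with rfl | hX
    · simp [H.zero_left]
    · exact (hH X hX).le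
  add_left X Y Z := H.add_right Z X Y
  smul_left X Y a := H.smul_right a Y X
  definite X hX := by
    by_contra hne
    simpa [hX] using hH X hne

lemma exists_basis_isOrthonormal [FiniteDimensional ℂ V] {ι : Type*} [Fintype ι]
    [DecidableEq ι] (hι : Module.finrank ℂ V = Fintype.card ι) (hH : ∀ X, X ≠ 0 → 0 < (H X X).re) (i₀ : ι)
    {u : V} (hu : H u u = 1) : ∃ b : Module.Basis ι ℂ V, H.IsOrthonormal b ∧ b i₀ = u := by
  let core := H.toCore hH
  let _ : NormedAddCommGroup V := core.toNormedAddCommGroup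
  let _ : InnerProductSpace ℂ V := InnerProductSpace.ofCore core.toCore
  have hu' : Orthonormal ℂ (({i₀} : Set ι).domRestrict fun _ => u) := by
    rw [orthonormal_iff_ite]
    rintro ⟨i, rfl⟩ ⟨j, rfl⟩
    rw [if_pos rfl]
    exact hu
  obtain ⟨b, hb⟩ := hu'.exists_orthonormalBasis_extension_of_card_eq hι
  refine ⟨b.toBasis, fun i j => ?_, by simpa using hb i₀ rfl⟩
  exact (orthonormal_iff_ite.mp b.orthonormal j i).trans (if_congr eq_comm rfl rfl)

end HermitianForm

namespace KahlerCurvature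

variable (T : KahlerCurvature V)

lemma R_zero_third (X Y W : V) : T.R X Y 0 W = 0 := by
  simpa using T.add3 X Y 0 0 W

lemma R_comm_diag (X Z : V) : T.R X X Z Z = T.R Z Z X X := by
  rw [T.sym13, T.sym24]

lemma R_smul_diag (a : ℂ) (X : V) :
    T.R (a • X) (a • X) (a • X) (a • X) = (normSq a ^ 2 : ℝ) * T.R X X X X := by
  simp only [T.smul1, T.smul2, T.smul3, T.smul4, ← mul_assoc, mul_conj, ofReal_pow]
  ring

def sesq (X Y : V) : V →ₗ[ℂ] V →ₗ⋆[ℂ] ℂ :=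
  LinearMap.mk₂'ₛₗ (RingHom.id ℂ) (starRingEnd ℂ) (fun Z W => T.R X Y Z W)
    (fun Z Z' W => T.add3 X Y Z Z' W) (fun a Z W => T.smul3 a X Y Z W)
    (fun Z W W' => T.add4 X Y Z W W') (fun a Z W => T.smul4 a X Y Z W)

def ricci {ι : Type*} [Fintype ι] (v : ι → V) : HermitianForm V where
  toFun X Y := ∑ m, T.R X Y (v m) (v m)
  add_left X X' Y := by simp only [T.add1, sum_add_distrib]
  smul_left a X Y := by simp only [T.smul1, mul_sum]
  conj_symm X Y := by rw [map_sum]; exact sum_congr rfl fun m _ => T.conj_symm _ _ _ _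

lemma ricci_eq_of_isOrthonormal {H : HermitianForm V} {ι : Type*} [Fintype ι] [DecidableEq ι]
    {b c : Module.Basis ι ℂ V} (hb : H.IsOrthonormal b) (hc : H.IsOrthonormal c) (X Y : V) :
    T.ricci c X Y = T.ricci b X Y :=
  hb.sum_sesq_eq hc (T.sesq X Y)

instance : Add (KahlerCurvature V) where
  add T₁ T₂ :=
  { R := fun X Y Z W => T₁.R X Y Z W + T₂.R X Y Z W
    add1 := by intros; rw [T₁.add1, T₂.add1]; ring
    smul1 := by intros; rw [T₁.smul1, T₂.smul1]; ring
    add2 := by intros; rw [T₁.add2, T₂.add2]; ring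
    smul2 := by intros; rw [T₁.smul2, T₂.smul2]; ring
    add3 := by intros; rw [T₁.add3, T₂.add3]; ring
    smul3 := by intros; rw [T₁.smul3, T₂.smul3]; ring
    add4 := by intros; rw [T₁.add4, T₂.add4]; ring
    smul4 := by intros; rw [T₁.smul4, T₂.smul4]; ring
    sym13 := by intros; rw [T₁.sym13, T₂.sym13]
    sym24 := by intros; rw [T₁.sym24, T₂.sym24]
    conj_symm := by intros; rw [map_add, T₁.conj_symm, T₂.conj_symm] }

instance : SMul ℝ (KahlerCurvature V) where
  smul r T :=
  { R := fun X Y Z W => r * T.R X Y Z W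
    add1 := by intros; rw [T.add1]; ring
    smul1 := by intros; rw [T.smul1]; ring
    add2 := by intros; rw [T.add2]; ring
    smul2 := by intros; rw [T.smul2]; ring
    add3 := by intros; rw [T.add3]; ring
    smul3 := by intros; rw [T.smul3]; ring
    add4 := by intros; rw [T.add4]; ring
    smul4 := by intros; rw [T.smul4]; ring
    sym13 := by intros; rw [T.sym13]
    sym24 := by intros; rw [T.sym24]
    conj_symm := by intros; rw [map_mul, conj_ofReal, T.conj_symm] }

@[simp] lemma add_R (T₁ T₂ : KahlerCurvature V) (X Y Z W : V) :
    (T₁ + T₂).R X Y Z W = T₁.R X Y Z W + T₂.R X Y Z W := rfl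

@[simp] lemma smul_R (r : ℝ) (X Y Z W : V) : (r • T).R X Y Z W = r * T.R X Y Z W := rfl

lemma re_R_diag_nonpos_of_unit {H : HermitianForm V} (hH : ∀ X, X ≠ 0 → 0 < (H X X).re)
    (hT : ∀ u, H u u = 1 → (T.R u u u u).re ≤ 0) (X : V) : (T.R X X X X).re ≤ 0 := by
  rcases eq_or_ne X 0 with rfl | hX
  · exact (by simpa using congrArg re (T.R_smul_diag 0 0) : (T.R 0 0 0 0).re = 0).le
  have hHX := hH X hX
  set r : ℝ := (√(H X X).re)⁻¹
  have hr : 0 < r := inv_pos.mpr (Real.sqrt_pos.mpr hHX)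
  have hu : H ((r : ℂ) • X) ((r : ℂ) • X) = 1 := by
    rw [H.smul_left, H.smul_right, conj_ofReal, ← H.ofReal_re_self]
    norm_cast
    rw [← mul_assoc, ← sq, inv_pow, Real.sq_sqrt hHX.le, inv_mul_cancel₀ hHX.ne']
  have := hT _ hu
  rw [T.R_smul_diag, re_ofReal_mul] at this
  exact nonpos_of_mul_nonpos_right this
    (pow_pos (normSq_pos.mpr (by exact_mod_cast hr.ne')) 2)

end KahlerCurvature

namespace HermitianForm

def kulkarniNomizu (B₁ B₂ : HermitianForm V) : KahlerCurvature V where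
  R X Y Z W := B₁ X Y * B₂ Z W + B₁ Z W * B₂ X Y + B₁ X W * B₂ Z Y + B₁ Z Y * B₂ X W
  add1 := by intros; simp only [B₁.add_left, B₂.add_left]; ring
  smul1 := by intros; simp only [B₁.smul_left, B₂.smul_left]; ring
  add2 := by intros; simp only [B₁.add_right, B₂.add_right]; ring
  smul2 := by intros; simp only [B₁.smul_right, B₂.smul_right]; ring
  add3 := by intros; simp only [B₁.add_left, B₂.add_left]; ring
  smul3 := by intros; simp only [B₁.smul_left, B₂.smul_left]; ring
  add4 := by intros; simp only [B₁.add_right, B₂.add_right]; ring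
  smul4 := by intros; simp only [B₁.smul_right, B₂.smul_right]; ring
  sym13 := by intros; ring
  sym24 := by intros; ring
  conj_symm := by intros; simp only [map_add, map_mul, ← B₁.conj_symm, ← B₂.conj_symm]; ring

variable (B₁ B₂ : HermitianForm V)

lemma re_kulkarniNomizu_diag (X : V) :
    ((B₁.kulkarniNomizu B₂).R X X X X).re = 4 * (B₁ X X).re * (B₂ X X).re := by
  change (B₁ X X * B₂ X X + B₁ X X * B₂ X X + B₁ X X * B₂ X X + B₁ X X * B₂ X X).re = _
  simp only [add_re, mul_re, B₁.im_self, B₂.im_self, mul_zero, sub_zero]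
  ring

lemma re_sum_kulkarniNomizu {ι : Type*} [Fintype ι] (x : ι → V) :
    (∑ i, ∑ j, (B₁.kulkarniNomizu B₂).R (x i) (x i) (x j) (x j)).re =
      2 * ((∑ i, (B₁ (x i) (x i)).re) * (∑ i, (B₂ (x i) (x i)).re) +
        (∑ i, ∑ j, B₁ (x i) (x j) * B₂ (x j) (x i)).re) := by
  have hswap₁ : ∑ i, ∑ j, B₁ (x j) (x j) * B₂ (x i) (x i) =
      ∑ i, ∑ j, B₁ (x i) (x i) * B₂ (x j) (x j) := sum_comm
  have hswap₂ : ∑ i, ∑ j, B₁ (x j) (x i) * B₂ (x i) (x j) =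
      ∑ i, ∑ j, B₁ (x i) (x j) * B₂ (x j) (x i) := sum_comm
  have hre : ∀ B : HermitianForm V, (∑ i, B (x i) (x i)).im = 0 := fun B => by
    simp [im_sum, B.im_self]
  change (∑ i, ∑ j, (B₁ (x i) (x i) * B₂ (x j) (x j) + B₁ (x j) (x j) * B₂ (x i) (x i) +
    B₁ (x i) (x j) * B₂ (x j) (x i) + B₁ (x j) (x i) * B₂ (x i) (x j))).re = _
  simp only [sum_add_distrib, hswap₁, hswap₂, ← sum_mul_sum, ← re_sum]
  simp only [add_re, mul_re, hre, mul_zero, sub_zero]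
  ring

end HermitianForm

namespace KahlerCurvature

variable (T : KahlerCurvature V)

def fourthRoot : Fin 4 → ℂ := ![1, I, -1, -I]

lemma sum_fourthRoot_R_third (A B X Y : V) :
    ∑ a, T.R A B (fourthRoot a • X + Y) (fourthRoot a • X + Y) =
      4 * T.R A B X X + 4 * T.R A B Y Y := by
  simp only [T.add3, T.add4, T.smul3, T.smul4, Fin.sum_univ_four, fourthRoot]
  simp only [Matrix.cons_val_zero, Matrix.cons_val_one, Matrix.cons_val_two,
    Matrix.cons_val_three, Matrix.head_cons, Matrix.tail_cons, map_one, map_neg, conj_I]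
  linear_combination (-2 * T.R A B X X) * I_sq

lemma sum_fourthRoot_R_diag (X Y : V) :
    ∑ a, T.R (fourthRoot a • X + Y) (fourthRoot a • X + Y) (fourthRoot a • X + Y)
        (fourthRoot a • X + Y) =
      4 * T.R X X X X + 4 * T.R Y Y Y Y + 16 * T.R X X Y Y := by
  have e₁ : T.R X Y Y X = T.R X X Y Y := T.sym24 X Y Y X
  have e₂ : T.R Y X X Y = T.R X X Y Y := T.sym13 Y X X Y
  have e₃ : T.R Y Y X X = T.R X X Y Y := T.R_comm_diag Y X
  simp only [T.add1, T.add2, T.add3, T.add4, T.smul1, T.smul2, T.smul3, T.smul4,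
    Fin.sum_univ_four, fourthRoot]
  simp only [Matrix.cons_val_zero, Matrix.cons_val_one, Matrix.cons_val_two,
    Matrix.cons_val_three, Matrix.head_cons, Matrix.tail_cons, map_one, map_neg, conj_I]
  have I_four : I ^ 4 = 1 := by rw [show (4 : ℕ) = 2 * 2 from rfl, pow_mul, I_sq]; norm_num
  linear_combination (4 : ℂ) * e₁ + 4 * e₂ + 4 * e₃ +
    (2 * T.R X Y X Y + 2 * T.R Y X Y X
      - 2 * (T.R X X Y Y + T.R X Y Y X + T.R Y X X Y + T.R Y Y X X)) * I_sq +
    (2 * T.R X X X X) * I_four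

def roydenVector {m : ℕ} (x : Fin m → V) (ε : Fin m → Fin 4) : V :=
  ∑ i, fourthRoot (ε i) • x i

lemma roydenVector_cons {m : ℕ} (x : Fin (m + 1) → V) (a : Fin 4) (ε : Fin m → Fin 4) :
    roydenVector x (Fin.cons a ε) = fourthRoot a • x 0 + roydenVector (Fin.tail x) ε := by
  simp [roydenVector, Fin.sum_univ_succ, Fin.tail]

lemma sum_R_third_roydenVector {m : ℕ} (x : Fin m → V) (A B : V) :
    ∑ ε, T.R A B (roydenVector x ε) (roydenVector x ε) =
      4 ^ m * ∑ i, T.R A B (x i) (x i) := by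
  induction m with
  | zero => simp [roydenVector, R_zero_third]
  | succ m ih =>
    simp only [Fin.sum_univ_pi_succ, roydenVector_cons]
    rw [sum_comm]
    simp only [T.sum_fourthRoot_R_third, sum_add_distrib, ← mul_sum, ih, Fin.sum_univ_succ,
      sum_const, card_univ, Fintype.card_pi, Fintype.card_fin, prod_const, nsmul_eq_mul, Fin.tail]
    push_cast
    ring

lemma sum_R_diag_roydenVector {m : ℕ} (x : Fin m → V) :
    ∑ ε, T.R (roydenVector x ε) (roydenVector x ε) (roydenVector x ε) (roydenVector x ε) =
      4 ^ m * (2 * ∑ i, ∑ j, T.R (x i) (x i) (x j) (x j) -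
        ∑ i, T.R (x i) (x i) (x i) (x i)) := by
  induction m with
  | zero => simp [roydenVector, R_zero_third]
  | succ m ih =>
    simp only [Fin.sum_univ_pi_succ, roydenVector_cons]
    rw [sum_comm]
    simp only [T.sum_fourthRoot_R_diag, sum_add_distrib, ← mul_sum, ih,
      sum_R_third_roydenVector, sum_const, card_univ, Fintype.card_pi, Fintype.card_fin,
      prod_const, nsmul_eq_mul, Fin.sum_univ_succ, Fin.tail]
    simp only [T.R_comm_diag (x (Fin.succ _)) (x 0)]
    push_cast
    ring

theorem re_sum_R_nonpos (hT : ∀ X, (T.R X X X X).re ≤ 0) {m : ℕ} (x : Fin m → V) :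
    (∑ i, ∑ j, T.R (x i) (x i) (x j) (x j)).re ≤ 0 := by
  have hsum := congrArg re (T.sum_R_diag_roydenVector x)
  have hdiag : (∑ i, T.R (x i) (x i) (x i) (x i)).re ≤ 0 := by
    rw [re_sum]; exact sum_nonpos fun i _ => hT _
  have hL : (∑ ε, T.R (roydenVector x ε) (roydenVector x ε) (roydenVector x ε)
      (roydenVector x ε)).re ≤ 0 := by
    rw [re_sum]; exact sum_nonpos fun ε _ => hT _
  simp only [hsum, show (4 : ℂ) ^ m = ((4 ^ m : ℝ) : ℂ) by push_cast; rfl, sub_re,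
    mul_re, ofReal_re, ofReal_im, re_ofNat, im_ofNat, zero_mul, sub_zero] at hL
  have h4 : (0 : ℝ) < 4 ^ m := by positivity
  nlinarith

theorem re_R_add_ricci_le [FiniteDimensional ℂ V] {H : HermitianForm V}
    (hH : ∀ X, X ≠ 0 → 0 < (H X X).re) {n k : ℕ} (hn : Module.finrank ℂ V = n) (hk : 1 ≤ k)
    (hkn : k < n) {σ : ℝ} {v : Module.Basis (Fin n) ℂ V} (hv : H.IsOrthonormal v)
    (hRic : ∀ f : Fin k → V, H.IsOrthonormal f → ∀ X ∈ Submodule.span ℂ (Set.range f),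
      (∑ j, T.R X X (f j) (f j)).re ≤ -((k : ℝ) + 1) * σ * (H X X).re)
    {u : V} (hu : H u u = 1) :
    ((n : ℝ) - k) * (T.R u u u u).re + ((k : ℝ) - 1) * (T.ricci v u u).re ≤
      -(((n : ℝ) - 1) * ((k : ℝ) + 1) * σ) := by
  obtain ⟨N, rfl⟩ : ∃ N, n = N + 1 := ⟨n - 1, by omega⟩
  obtain ⟨K, rfl⟩ : ∃ K, k = K + 1 := ⟨k - 1, by omega⟩
  have hKN : K ≤ N := by omega
  have : NeZero N := ⟨by omega⟩
  obtain ⟨b, hb, hb0⟩ := H.exists_basis_isOrthonormal (ι := Fin (N + 1))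
    (by rw [hn, Fintype.card_fin]) hH 0 hu
  set y : Fin N → ℝ := fun s => (T.R u u (b s.succ) (b s.succ)).re
  have hricci : (T.ricci v u u).re = (T.R u u u u).re + ∑ s, y s := by
    rw [T.ricci_eq_of_isOrthonormal hb hv]
    simp [ricci, Fin.sum_univ_succ, hb0, re_sum, y]
  have hwindow : ∀ t : Fin N,
      (T.R u u u u).re + ∑ j : Fin K, y (t + Fin.castLE hKN j) ≤ -((K : ℝ) + 2) * σ := by
    intro t
    set g : Fin (K + 1) → Fin (N + 1) := Fin.cons 0 fun j => (t + Fin.castLE hKN j).succ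
    have hg : Function.Injective g := Fin.cons_injective_iff.mpr
      ⟨by simp [Fin.succ_ne_zero],
        (Fin.succ_injective _).comp ((add_right_injective t).comp (Fin.castLE_injective hKN))⟩
    have := hRic (b ∘ g) (hb.comp hg) u (Submodule.subset_span ⟨0, by simp [g, hb0]⟩)
    simp only [Function.comp_apply, Fin.sum_univ_succ, g, Fin.cons_zero, Fin.cons_succ, hb0, hu,
      add_re, re_sum, one_re, mul_one] at this
    exact this.trans_eq (by push_cast; ring)
  have hsum := sum_le_sum fun t (_ : t ∈ univ) => hwindow t
  simp only [sum_add_distrib, Fin.sum_sum_add_castLE, sum_const, card_univ, Fintype.card_fin,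
    nsmul_eq_mul] at hsum
  rw [hricci]
  push_cast
  linarith

end KahlerCurvature

end

/-- Lemma 2 (Chu–Lee–Tam, via Royden's trick): `V` carries two Hermitian inner
products; `g` is the ambient inner product (so `g`-orthonormal bases are
`OrthonormalBasis`), and `h` is another Hermitian inner product, linear in the
first argument and conjugate-linear in the second.  If the `k`-Ricci curvature
(computed with `h`-orthonormal bases) satisfies
`Ric_k(Σ)(X,X̄) ≤ -(k+1)σ h(X,X)`, then for any `g`-orthonormal basis `e`,
`2 ∑_{i,j} R(eᵢ,ēᵢ,eⱼ,ēⱼ)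
  ≤ -((n-1)(k+1)σ/(n-k)) ((tr_g h)² + |h|_g²)
    - ((k-1)/(n-k)) (tr_g h)(tr_g Ric) - ((k-1)/(n-k)) ⟨h, Ric⟩_g`,
where `Ric` is the Ricci form of `R` with respect to `h`, computed with the
`h`-orthonormal basis `v`. -/
theorem stmt1 {V : Type*} [NormedAddCommGroup V] [InnerProductSpace ℂ V]
    [FiniteDimensional ℂ V]
    (n k : ℕ) (hn : Module.finrank ℂ V = n) (hk1 : 1 ≤ k) (hkn : k < n)
    (σ : ℝ)
    (h : V → V → ℂ)
    (h_add : ∀ X X' Y, h (X + X') Y = h X Y + h X' Y)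
    (h_smul : ∀ (a : ℂ) (X Y : V), h (a • X) Y = a * h X Y)
    (h_herm : ∀ X Y, h Y X = (starRingEnd ℂ) (h X Y))
    (h_pos : ∀ X : V, X ≠ 0 → 0 < (h X X).re)
    (T : KahlerCurvature V)
    (v : Module.Basis (Fin n) ℂ V)
    (hv : ∀ i j, h (v i) (v j) = if i = j then 1 else 0)
    (hRick : ∀ P : Submodule ℂ V, Module.finrank ℂ P = k →
      ∀ f : Fin k → V, (∀ j, f j ∈ P) →
        (∀ i j, h (f i) (f j) = if i = j then 1 else 0) →
        Submodule.span ℂ (Set.range f) = P →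
        ∀ X ∈ P,
          (∑ j, T.R X X (f j) (f j)).re ≤ -((k : ℝ) + 1) * σ * (h X X).re)
    (e : OrthonormalBasis (Fin n) ℂ V) :
    2 * (∑ i, ∑ j, T.R (e i) (e i) (e j) (e j)).re
      ≤ -(((n : ℝ) - 1) * ((k : ℝ) + 1) * σ / ((n : ℝ) - (k : ℝ)))
            * ((∑ i, (h (e i) (e i)).re) ^ 2 + ∑ i, ∑ j, ‖h (e i) (e j)‖ ^ 2)
        - (((k : ℝ) - 1) / ((n : ℝ) - (k : ℝ))) * (∑ i, (h (e i) (e i)).re)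
            * (∑ i, (∑ m, T.R (e i) (e i) (v m) (v m)).re)
        - (((k : ℝ) - 1) / ((n : ℝ) - (k : ℝ)))
            * (∑ i, ∑ j, h (e i) (e j) * ∑ m, T.R (e j) (e i) (v m) (v m)).re := by
  let H : HermitianForm V := ⟨h, h_add, h_smul, h_herm⟩
  have hRic : ∀ f : Fin k → V, H.IsOrthonormal f → ∀ X ∈ Submodule.span ℂ (Set.range f),
      (∑ j, T.R X X (f j) (f j)).re ≤ -((k : ℝ) + 1) * σ * (H X X).re := fun f hf =>
    hRick _ (by rw [finrank_span_eq_card hf.linearIndependent, Fintype.card_fin]) f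
      (fun j => Submodule.subset_span ⟨j, rfl⟩) hf rfl
  have hD : (0 : ℝ) < n - k := sub_pos.mpr (by exact_mod_cast hkn)
  let Q : KahlerCurvature V := (4 * ((n : ℝ) - k)) • T +
    ((k : ℝ) - 1) • H.kulkarniNomizu (T.ricci v) +
    (((n : ℝ) - 1) * ((k : ℝ) + 1) * σ) • H.kulkarniNomizu H
  have hQ : ∀ X, (Q.R X X X X).re ≤ 0 :=
    Q.re_R_diag_nonpos_of_unit (H := H) h_pos fun u hu => by
      have := T.re_R_add_ricci_le (H := H) h_pos hn hk1 hkn hv hRic hu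
      simp only [Q, KahlerCurvature.add_R, KahlerCurvature.smul_R, Complex.add_re,
        Complex.re_ofReal_mul, HermitianForm.re_kulkarniNomizu_diag, hu, Complex.one_re]
      linarith
  have hsum := Q.re_sum_R_nonpos hQ e
  simp only [Q, KahlerCurvature.add_R, KahlerCurvature.smul_R, Finset.sum_add_distrib,
    ← Finset.mul_sum, Complex.add_re, Complex.re_ofReal_mul, HermitianForm.re_sum_kulkarniNomizu,
    HermitianForm.re_sum_mul_swap] at hsum
  dsimp only [H, KahlerCurvature.ricci] at hsum
  rw [← mul_le_mul_iff_right₀ hD]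
  field_simp
  linarith
end
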